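/- For any even nonzero integer b_1: if b_1 > 0 then F̃[b_1 + 2] = F̃[b_1] + l^{b_1+2}·w^{−1}·(1 − q), and if b_1 < 0 then F̃[b_1 − 2] = l²·F̃[b_1] + 1 − q^{−1}, as elements of K = ℚ(l,s) with q = s². -/

import Mathlib

open scoped BigOperators

/-- Continued fraction value in `ℚ ∪ {∞}`, with `none` playing the role of `∞ = 1/0`.
`[ ] = ∞`, and `[c₁,…,cₙ] = c₁ + 1/[c₂,…,cₙ]` with `x + ∞ = ∞` and `1/∞ = 0`. -/
def cfVal : List ℤ → Option ℚ
  | [] => none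
  | c :: cs =>
    match cfVal cs with
    | none => some (c : ℚ)
    | some x => if x = 0 then none else some ((c : ℚ) + 1 / x)

/-- A continued fraction is positive if every term is at least 1. -/
def PosCF (L : List ℤ) : Prop := ∀ a ∈ L, 1 ≤ a

/-- A continued fraction is even if every term is even and nonzero. -/
def EvenCF (L : List ℤ) : Prop := ∀ b ∈ L, 2 ∣ b ∧ b ≠ 0

/-- `ell L i = ℓ_i = |c₁| + ⋯ + |c_i|`. -/
def ell (L : List ℤ) (i : ℕ) : ℕ := ((L.take i).map Int.natAbs).sum

/-- `typ L i = t_i = (−1)^(i−1)·sgn(c_i)` for `1 ≤ i ≤ n`, with the convention `t_0 = −1`. -/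
def typ (L : List ℤ) (i : ℕ) : ℤ :=
  if i = 0 then -1 else (-1) ^ (i - 1) * Int.sign (L.getD (i - 1) 0)

/-- The conditions of Definition 3.5: every `|c_i| ≥ 1` (i.e. `c_i ≠ 0`), and whenever
`t_i = t_{i+1}` both `|c_i| > 1` and `|c_{i+1}| > 1`. -/
def QCond (L : List ℤ) : Prop :=
  (∀ c ∈ L, c ≠ 0) ∧
  ∀ i : ℕ, 1 ≤ i → i + 1 ≤ L.length → typ L i = typ L (i + 1) →
    1 < (L.getD (i - 1) 0).natAbs ∧ 1 < (L.getD i 0).natAbs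

/-- `v` is a label of the labeled path poset `Q[c₁,…,cₙ]`: `1 ≤ v ≤ ℓₙ − 1`, and `v` is not
one of the removed labels `ℓ_i` with `t_i = t_{i+1}`. -/
def kept (L : List ℤ) (v : ℕ) : Prop :=
  1 ≤ v ∧ v < ell L L.length ∧
  ∀ i ∈ Finset.Ico 1 L.length, typ L i = typ L (i + 1) → v ≠ ell L i

open Classical in
/-- The underlying label set of `Q[c₁,…,cₙ]`. -/
noncomputable def QFinset (L : List ℤ) : Finset ℕ :=
  (Finset.Ioo 0 (ell L L.length)).filter (kept L)

/-- The index `i` of the segment `(ℓ_{i−1}, ℓ_i]` containing the label `v`. -/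
def seg (L : List ℤ) (v : ℕ) : ℕ :=
  1 + ((Finset.range L.length).filter (fun i => ell L (i + 1) < v)).card

/-- `u < v` are consecutive labels of `Q[c₁,…,cₙ]`. -/
def consec (L : List ℤ) (u v : ℕ) : Prop :=
  kept L u ∧ kept L v ∧ u < v ∧ ∀ w, u < w → w < v → ¬ kept L w

/-- The sign of the Hasse edge between consecutive labels `u < v` of `Q[c₁,…,cₙ]`:
if no label is skipped the edge lies in the segment of `v` and has sign `t_{seg v}`;
if a removed junction label `ℓ_j` (with `t_j = t_{j+1}`) is skipped, the edge joining the
two adjacent chains has sign `−t_j = −t_{seg v}`. -/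
def edgeSign (L : List ℤ) (u v : ℕ) : ℤ :=
  if u + 1 = v then typ L (seg L v) else -typ L (seg L v)

/-- The covering relation of `Q[c₁,…,cₙ]`: consecutive labels `u < v` give a cover `u ⋖ v`
when the corresponding edge sign is `1`, and a cover `v ⋖ u` when it is `−1`. -/
def pcov (L : List ℤ) (u v : ℕ) : Prop :=
  (consec L u v ∧ edgeSign L u v = 1) ∨ (consec L v u ∧ edgeSign L v u = -1)

/-- The order of the labeled path poset `Q[c₁,…,cₙ]` (on labels). -/
def ple (L : List ℤ) : ℕ → ℕ → Prop := Relation.ReflTransGen (pcov L)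

/-- The order of `Q[c₁,…,cₙ]` as a relation on its underlying label set. -/
noncomputable def pleRel (L : List ℤ) :
    {v : ℕ // v ∈ QFinset L} → {v : ℕ // v ∈ QFinset L} → Prop :=
  fun a b => ple L (a : ℕ) (b : ℕ)

/-- Order ideals (downward-closed subsets) of `Q[c₁,…,cₙ]`. -/
def isIdeal (L : List ℤ) (I : Finset ℕ) : Prop :=
  I ⊆ QFinset L ∧ ∀ u v : ℕ, ple L u v → v ∈ I → u ∈ I

open Classical in
/-- The F-polynomial `F[c₁,…,cₙ] = F(Q[c₁,…,cₙ]) = Σ_I Π_{i∈I} y_i ∈ ℤ[y₁,y₂,…]`,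
the sum over all order ideals `I` of `Q[c₁,…,cₙ]`. -/
noncomputable def Fpoly (L : List ℤ) : MvPolynomial ℕ ℤ :=
  ∑ I ∈ (QFinset L).powerset, if isIdeal L I then ∏ i ∈ I, MvPolynomial.X i else 0

/-- The label set of the chain `S_m`: the labels `ℓ_{m−1}+1, …, ℓ_m − 1`. -/
def SmSet (L : List ℤ) (m : ℕ) : Finset ℕ := Finset.Ioo (ell L (m - 1)) (ell L m)

/-- `lam L m j = λ_m(j)`, the `j`-th vertex of `S_m` from the bottom:
`ℓ_{m−1}+j` if `t_m = 1` and `ℓ_m − j` if `t_m = −1`. -/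
def lam (L : List ℤ) (m j : ℕ) : ℕ :=
  if typ L m = 1 then ell L (m - 1) + j else ell L m - j

/-- Order ideals of the chain `S_m` (ordered by labels if `t_m = 1`, reversed if `t_m = −1`). -/
def chainIdeal (L : List ℤ) (m : ℕ) (I : Finset ℕ) : Prop :=
  I ⊆ SmSet L m ∧
  ∀ u ∈ SmSet L m, ∀ v ∈ SmSet L m,
    (if typ L m = 1 then u ≤ v else v ≤ u) → v ∈ I → u ∈ I

open Classical in
/-- The F-polynomial `F(S_m)` of the chain `S_m`. -/
noncomputable def FS (L : List ℤ) (m : ℕ) : MvPolynomial ℕ ℤ :=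
  ∑ I ∈ (SmSet L m).powerset, if chainIdeal L m I then ∏ i ∈ I, MvPolynomial.X i else 0

noncomputable section

/-- The field `K = ℚ(l,s)` of rational functions in two variables over `ℚ`. -/
abbrev KK : Type := FractionRing (MvPolynomial (Fin 2) ℚ)

/-- The variable `l` of `K = ℚ(l,s)`. -/
def lK : KK := algebraMap (MvPolynomial (Fin 2) ℚ) KK (MvPolynomial.X 0)

/-- The variable `s = q^{1/2}` of `K = ℚ(l,s)`. -/
def sK : KK := algebraMap (MvPolynomial (Fin 2) ℚ) KK (MvPolynomial.X 1)

/-- `q = s²`. -/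
def qK : KK := sK ^ 2

/-- `w = (1 − l²q)/(1 − q⁻¹)`. -/
def wK : KK := (1 - lK ^ 2 * qK) / (1 - qK⁻¹)

/-- The values of the specialization `φ_P` (associated to the even continued fraction `L`,
which only matters through the sign of `b₁`): `y₁ ↦ l²·w⁻¹` if `b₁ > 0` and `y₁ ↦ q⁻²·w`
if `b₁ < 0`; `y_{2i} ↦ −l²q` and `y_{2i+1} ↦ −q⁻¹` for `i ≥ 1`. -/
def phiPvar (L : List ℤ) (i : ℕ) : KK :=
  if i = 1 then (if 0 < L.headI then lK ^ 2 * wK⁻¹ else qK⁻¹ ^ 2 * wK)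
  else if i % 2 = 0 then -(lK ^ 2 * qK) else -qK⁻¹

/-- The specialization `φ_P : ℤ[y₁,y₂,…] → K`. -/
def phiP (L : List ℤ) (p : MvPolynomial ℕ ℤ) : KK :=
  MvPolynomial.eval₂ (Int.castRingHom KK) (phiPvar L) p

end


section Aux
open Finset MvPolynomial

lemma ell_one (b : ℤ) : ell [b] 1 = b.natAbs := by simp [ell]

lemma typ_one (b : ℤ) : typ [b] 1 = Int.sign b := by simp [typ]

lemma kept_iff (b : ℤ) (v : ℕ) : kept [b] v ↔ 1 ≤ v ∧ v < b.natAbs := by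
  unfold kept; simp [ell]

lemma QFinset_eq (b : ℤ) : QFinset [b] = Finset.Ioo 0 b.natAbs := by
  classical
  ext v
  simp only [QFinset, Finset.mem_filter, Finset.mem_Ioo, kept_iff]
  constructor
  · rintro ⟨⟨h1, h2⟩, _⟩
    refine ⟨h1, ?_⟩
    have : ell [b] [b].length = b.natAbs := by simpa using ell_one b
    omega
  · rintro ⟨h1, h2⟩
    have : ell [b] [b].length = b.natAbs := by simpa using ell_one b
    exact ⟨⟨by omega, by omega⟩, by omega, by omega⟩

lemma seg_eq (b : ℤ) (v : ℕ) (hv : v ≤ b.natAbs) : seg [b] v = 1 := by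
  unfold seg
  have h : ¬ (ell [b] (0 + 1) < v) := by rw [ell_one]; omega
  simp [List.length, Finset.range_one, Finset.filter_singleton, h]

lemma consec_iff (b : ℤ) (u v : ℕ) :
    consec [b] u v ↔ 1 ≤ u ∧ v = u + 1 ∧ v < b.natAbs := by
  constructor
  · rintro ⟨hu, hv, huv, hmin⟩
    rw [kept_iff] at hu hv
    refine ⟨hu.1, ?_, hv.2⟩
    by_contra h
    have h1 : u + 1 < v := by omega
    exact hmin (u + 1) (by omega) h1 ((kept_iff b _).2 ⟨by omega, by omega⟩)
  · rintro ⟨hu, rfl, hv⟩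
    refine ⟨(kept_iff b _).2 ⟨hu, by omega⟩, (kept_iff b _).2 ⟨by omega, hv⟩, by omega, ?_⟩
    intro w hw1 hw2 _
    omega

lemma edgeSign_adj (b : ℤ) (u : ℕ) (h : u + 1 + 1 ≤ b.natAbs) :
    edgeSign [b] u (u + 1) = Int.sign b := by
  unfold edgeSign
  rw [if_pos rfl, seg_eq b _ (by omega), typ_one]

lemma pcov_pos (b : ℤ) (hb : 0 < b) (u v : ℕ) :
    pcov [b] u v ↔ 1 ≤ u ∧ v = u + 1 ∧ v < b.natAbs := by
  have hs : Int.sign b = 1 := Int.sign_eq_one_of_pos hb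
  constructor
  · rintro (⟨hc, _⟩ | ⟨hc, he⟩)
    · exact (consec_iff b u v).1 hc
    · obtain ⟨h1, rfl, h3⟩ := (consec_iff b v u).1 hc
      rw [edgeSign_adj b v (by omega), hs] at he
      exact absurd he (by norm_num)
  · rintro ⟨hu, rfl, hv⟩
    exact Or.inl ⟨(consec_iff b u _).2 ⟨hu, rfl, hv⟩, by rw [edgeSign_adj b u (by omega), hs]⟩

lemma pcov_neg (b : ℤ) (hb : b < 0) (u v : ℕ) :
    pcov [b] u v ↔ 1 ≤ v ∧ u = v + 1 ∧ u < b.natAbs := by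
  have hs : Int.sign b = -1 := Int.sign_eq_neg_one_of_neg hb
  constructor
  · rintro (⟨hc, he⟩ | ⟨hc, _⟩)
    · obtain ⟨h1, rfl, h3⟩ := (consec_iff b u v).1 hc
      rw [edgeSign_adj b u (by omega), hs] at he
      exact absurd he (by norm_num)
    · exact (consec_iff b v u).1 hc
  · rintro ⟨hv, rfl, hu⟩
    exact Or.inr ⟨(consec_iff b v _).2 ⟨hv, rfl, hu⟩, by rw [edgeSign_adj b v (by omega), hs]⟩

lemma ple_pos (b : ℤ) (hb : 0 < b) (u v : ℕ) (h : ple [b] u v) :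
    u = v ∨ (1 ≤ u ∧ u < v) := by
  induction h with
  | refl => exact Or.inl rfl
  | tail _ hcov ih =>
    rename_i m w _
    obtain ⟨h1, rfl, h3⟩ := (pcov_pos b hb m w).1 hcov
    rcases ih with rfl | ⟨h4, h5⟩
    · exact Or.inr ⟨h1, by omega⟩
    · exact Or.inr ⟨h4, by omega⟩

lemma ple_neg (b : ℤ) (hb : b < 0) (u v : ℕ) (h : ple [b] u v) :
    u = v ∨ (1 ≤ v ∧ v < u ∧ u < b.natAbs) := by
  induction h with
  | refl => exact Or.inl rfl
  | tail _ hcov ih =>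
    rename_i m w _
    obtain ⟨h1, rfl, h3⟩ := (pcov_neg b hb m w).1 hcov
    rcases ih with rfl | ⟨h4, h5, h6⟩
    · exact Or.inr ⟨h1, by omega, h3⟩
    · exact Or.inr ⟨h1, by omega, h6⟩

lemma ple_pos_of_le (b : ℤ) (hb : 0 < b) (u v : ℕ) (h1 : 1 ≤ u) (h2 : u ≤ v)
    (h3 : v < b.natAbs) : ple [b] u v := by
  induction v, h2 using Nat.le_induction with
  | base => exact Relation.ReflTransGen.refl
  | succ v hv ih =>
    exact (ih (by omega)).tail ((pcov_pos b hb v (v + 1)).2 ⟨by omega, rfl, h3⟩)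

lemma ple_neg_of_le (b : ℤ) (hb : b < 0) (u v : ℕ) (h1 : 1 ≤ v) (h2 : v ≤ u)
    (h3 : u < b.natAbs) : ple [b] u v := by
  -- ple u v means u ≤_poset v ; for b<0 poset order is reverse of label order
  induction u, h2 using Nat.le_induction with
  | base => exact Relation.ReflTransGen.refl
  | succ u hu ih =>
    exact Relation.ReflTransGen.head
      ((pcov_neg b hb (u + 1) u).2 ⟨by omega, rfl, h3⟩) (ih (by omega))

lemma isIdeal_pos_iff (b : ℤ) (hb : 0 < b) (I : Finset ℕ) :
    isIdeal [b] I ↔ ∃ k, k < b.natAbs ∧ I = Finset.Icc 1 k := by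
  have hn : 1 ≤ b.natAbs := by
    have := Int.natAbs_pos.2 (by omega : b ≠ 0); omega
  constructor
  · rintro ⟨hsub, hcl⟩
    rw [QFinset_eq] at hsub
    rcases I.eq_empty_or_nonempty with rfl | hne
    · exact ⟨0, by omega, by simp⟩
    · refine ⟨I.max' hne, ?_, ?_⟩
      · have := hsub (I.max'_mem hne); rw [Finset.mem_Ioo] at this; omega
      · ext u
        simp only [Finset.mem_Icc]
        constructor
        · intro hu
          have h1 := hsub hu; rw [Finset.mem_Ioo] at h1
          exact ⟨by omega, I.le_max' u hu⟩
        · rintro ⟨h1, h2⟩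
          have hm := hsub (I.max'_mem hne); rw [Finset.mem_Ioo] at hm
          exact hcl u (I.max' hne) (ple_pos_of_le b hb u _ h1 h2 hm.2) (I.max'_mem hne)
  · rintro ⟨k, hk, rfl⟩
    constructor
    · rw [QFinset_eq]
      intro u hu
      simp only [Finset.mem_Icc] at hu
      simp only [Finset.mem_Ioo]
      omega
    · intro u v hle hv
      simp only [Finset.mem_Icc] at hv ⊢
      rcases ple_pos b hb u v hle with rfl | ⟨h1, h2⟩
      · exact hv
      · exact ⟨h1, by omega⟩

lemma isIdeal_neg_iff (b : ℤ) (hb : b < 0) (I : Finset ℕ) :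
    isIdeal [b] I ↔ ∃ k, 1 ≤ k ∧ k ≤ b.natAbs ∧ I = Finset.Icc k (b.natAbs - 1) := by
  have hn : 1 ≤ b.natAbs := by
    have := Int.natAbs_pos.2 (by omega : b ≠ 0); omega
  constructor
  · rintro ⟨hsub, hcl⟩
    rw [QFinset_eq] at hsub
    rcases I.eq_empty_or_nonempty with rfl | hne
    · exact ⟨b.natAbs, hn, le_refl _, by rw [Finset.Icc_eq_empty]; omega⟩
    · refine ⟨I.min' hne, ?_, ?_, ?_⟩
      · have := hsub (I.min'_mem hne); rw [Finset.mem_Ioo] at this; omega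
      · have := hsub (I.min'_mem hne); rw [Finset.mem_Ioo] at this; omega
      · ext u
        simp only [Finset.mem_Icc]
        constructor
        · intro hu
          have h1 := hsub hu; rw [Finset.mem_Ioo] at h1
          exact ⟨I.min'_le u hu, by omega⟩
        · rintro ⟨h1, h2⟩
          have hm := hsub (I.min'_mem hne); rw [Finset.mem_Ioo] at hm
          exact hcl u (I.min' hne)
            (ple_neg_of_le b hb u _ hm.1 h1 (by omega)) (I.min'_mem hne)
  · rintro ⟨k, hk1, hk2, rfl⟩
    constructor
    · rw [QFinset_eq]
      intro u hu
      simp only [Finset.mem_Icc] at hu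
      simp only [Finset.mem_Ioo]
      omega
    · intro u v hle hv
      simp only [Finset.mem_Icc] at hv ⊢
      rcases ple_neg b hb u v hle with rfl | ⟨h1, h2, h3⟩
      · exact hv
      · exact ⟨by omega, by omega⟩

lemma Fpoly_pos (b : ℤ) (hb : 0 < b) :
    Fpoly [b] = ∑ k ∈ Finset.range b.natAbs, ∏ i ∈ Finset.Icc 1 k, (MvPolynomial.X i : MvPolynomial ℕ ℤ) := by
  classical
  rw [Fpoly, Finset.sum_ite, Finset.sum_const_zero, add_zero]
  rw [show (QFinset [b]).powerset.filter (isIdeal [b])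
      = (Finset.range b.natAbs).image (fun k => Finset.Icc 1 k) from ?_]
  · rw [Finset.sum_image]
    intro k hk k' hk' h
    simp only [Finset.mem_coe, Finset.mem_range] at hk hk' h
    by_contra hne
    rcases Nat.lt_or_ge k k' with hlt | hge
    · have : k' ∈ Finset.Icc 1 k' := Finset.mem_Icc.2 ⟨by omega, le_refl _⟩
      rw [← h] at this
      simp only [Finset.mem_Icc] at this; omega
    · have hlt : k' < k := by omega
      have : k ∈ Finset.Icc 1 k := Finset.mem_Icc.2 ⟨by omega, le_refl _⟩
      rw [h] at this
      simp only [Finset.mem_Icc] at this; omega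
  · ext I
    simp only [Finset.mem_filter, Finset.mem_powerset, Finset.mem_image, Finset.mem_range]
    constructor
    · rintro ⟨_, hid⟩
      obtain ⟨k, hk, rfl⟩ := (isIdeal_pos_iff b hb I).1 hid
      exact ⟨k, hk, rfl⟩
    · rintro ⟨k, hk, rfl⟩
      have hid := (isIdeal_pos_iff b hb _).2 ⟨k, hk, rfl⟩
      exact ⟨hid.1, hid⟩

lemma Fpoly_neg (b : ℤ) (hb : b < 0) :
    Fpoly [b] = ∑ k ∈ Finset.Icc 1 b.natAbs,
      ∏ i ∈ Finset.Icc k (b.natAbs - 1), (MvPolynomial.X i : MvPolynomial ℕ ℤ) := by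
  classical
  rw [Fpoly, Finset.sum_ite, Finset.sum_const_zero, add_zero]
  rw [show (QFinset [b]).powerset.filter (isIdeal [b])
      = (Finset.Icc 1 b.natAbs).image (fun k => Finset.Icc k (b.natAbs - 1)) from ?_]
  · rw [Finset.sum_image]
    intro k hk k' hk' h
    simp only [Finset.mem_coe, Finset.mem_Icc] at hk hk' h
    by_contra hne
    rcases Nat.lt_or_ge k k' with hlt | hge
    · have : k ∈ Finset.Icc k (b.natAbs - 1) := Finset.mem_Icc.2 ⟨le_refl _, by omega⟩
      rw [h] at this
      simp only [Finset.mem_Icc] at this; omega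
    · have hlt : k' < k := by omega
      have : k' ∈ Finset.Icc k' (b.natAbs - 1) := Finset.mem_Icc.2 ⟨le_refl _, by omega⟩
      rw [← h] at this
      simp only [Finset.mem_Icc] at this; omega
  · ext I
    simp only [Finset.mem_filter, Finset.mem_powerset, Finset.mem_image, Finset.mem_Icc]
    constructor
    · rintro ⟨_, hid⟩
      obtain ⟨k, h1, h2, rfl⟩ := (isIdeal_neg_iff b hb I).1 hid
      exact ⟨k, ⟨h1, h2⟩, rfl⟩
    · rintro ⟨k, ⟨h1, h2⟩, rfl⟩
      have hid := (isIdeal_neg_iff b hb _).2 ⟨k, h1, h2, rfl⟩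
      exact ⟨hid.1, hid⟩

end Aux


section Aux2
open Finset

lemma sK_ne : sK ≠ 0 := by
  simp [sK, IsFractionRing.to_map_eq_zero_iff, MvPolynomial.X_ne_zero]

lemma qK_ne : qK ≠ 0 := pow_ne_zero _ sK_ne

lemma phiPvar_even' (L : List ℤ) (i : ℕ) (h1 : i ≠ 1) (h2 : i % 2 = 0) :
    phiPvar L i = -(lK ^ 2 * qK) := by simp [phiPvar, h1, h2]

lemma phiPvar_odd' (L : List ℤ) (i : ℕ) (h1 : i ≠ 1) (h2 : i % 2 = 1) :
    phiPvar L i = -qK⁻¹ := by simp [phiPvar, h1, h2]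

lemma phiPvar_one_pos (b : ℤ) (hb : 0 < b) : phiPvar [b] 1 = lK ^ 2 * wK⁻¹ := by
  simp [phiPvar, List.headI, hb]

lemma phiPvar_pair (L : List ℤ) (n : ℕ) (h0 : n ≠ 0) (h2 : n % 2 = 0) :
    phiPvar L n * phiPvar L (n + 1) = lK ^ 2 := by
  rw [phiPvar_even' L n (by omega) h2, phiPvar_odd' L (n + 1) (by omega) (by omega)]
  have hq : qK * qK⁻¹ = 1 := mul_inv_cancel₀ qK_ne
  linear_combination lK ^ 2 * hq

lemma phiPvar_congr (b c : ℤ) (h : 0 < b ↔ 0 < c) : phiPvar [b] = phiPvar [c] := by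
  funext i
  unfold phiPvar
  by_cases h0 : 0 < b
  · simp [List.headI, h0, h.1 h0]
  · simp [List.headI, h0, mt h.2 h0]

lemma phiP_F (L : List ℤ) (S : Finset ℕ) (f : ℕ → Finset ℕ) :
    phiP L (∑ k ∈ S, ∏ i ∈ f k, (MvPolynomial.X i : MvPolynomial ℕ ℤ)) =
      ∑ k ∈ S, ∏ i ∈ f k, phiPvar L i := by
  have : phiP L = ⇑(MvPolynomial.eval₂Hom (Int.castRingHom KK) (phiPvar L)) := by
    funext p
    simp [phiP, MvPolynomial.coe_eval₂Hom]
  rw [this, map_sum]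
  refine Finset.sum_congr rfl fun k _ => ?_
  rw [map_prod]
  exact Finset.prod_congr rfl fun i _ => MvPolynomial.eval₂Hom_X' _ _ _

lemma prod_phi_odd (b : ℤ) (hb : 0 < b) (m : ℕ) :
    ∏ i ∈ Finset.Icc 1 (2 * m + 1), phiPvar [b] i = lK ^ 2 * wK⁻¹ * lK ^ (2 * m) := by
  induction m with
  | zero =>
    simp only [Nat.mul_zero, Nat.zero_add, Finset.Icc_self, Finset.prod_singleton,
      pow_zero, mul_one]
    exact phiPvar_one_pos b hb
  | succ m ih =>
    rw [show 2 * (m + 1) + 1 = (2 * m + 1 + 1) + 1 from by omega,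
      Finset.prod_Icc_succ_top (by omega),
      Finset.prod_Icc_succ_top (by omega), ih,
      phiPvar_even' [b] (2 * m + 1 + 1) (by omega) (by omega),
      phiPvar_odd' [b] (2 * m + 1 + 1 + 1) (by omega) (by omega)]
    have hq : qK * qK⁻¹ = 1 := mul_inv_cancel₀ qK_ne
    have he : 2 * (m + 1) = 2 * m + 2 := by omega
    rw [he]
    linear_combination (lK ^ 2 * wK⁻¹ * lK ^ (2 * m) * lK ^ 2) * hq

end Aux2

/-- For an even nonzero integer `b₁`: if `b₁ > 0` then
`F̃[b₁ + 2] = F̃[b₁] + l^{b₁+2}·w⁻¹·(1 − q)`, and if `b₁ < 0` then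
`F̃[b₁ − 2] = l²·F̃[b₁] + 1 − q⁻¹`. -/
theorem specialized_F_single_step (b : ℤ) (hb : 2 ∣ b) (hb0 : b ≠ 0) :
    (0 < b → phiP [b + 2] (Fpoly [b + 2]) =
      phiP [b] (Fpoly [b]) + lK ^ (b + 2) * wK⁻¹ * (1 - qK)) ∧
    (b < 0 → phiP [b - 2] (Fpoly [b - 2]) =
      lK ^ 2 * phiP [b] (Fpoly [b]) + 1 - qK⁻¹) := by
  constructor
  · intro hbpos
    set m : ℕ := b.natAbs / 2 - 1 with hmdef
    have hm : b.natAbs = 2 * m + 2 := by omega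
    have hvar : phiPvar [b + 2] = phiPvar [b] := phiPvar_congr _ _ (by omega)
    rw [Fpoly_pos (b + 2) (by omega), Fpoly_pos b hbpos, phiP_F, phiP_F, hvar,
      show (b + 2).natAbs = 2 * m + 2 + 1 + 1 from by omega, hm,
      Finset.sum_range_succ, Finset.sum_range_succ]
    have hA : ∏ i ∈ Finset.Icc 1 (2 * m + 2), phiPvar [b] i
        = lK ^ 2 * wK⁻¹ * lK ^ (2 * m) * -(lK ^ 2 * qK) := by
      rw [show (2 * m + 2 : ℕ) = (2 * m + 1) + 1 from by omega,
        Finset.prod_Icc_succ_top (by omega), prod_phi_odd b hbpos m,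
        phiPvar_even' [b] (2 * m + 1 + 1) (by omega) (by omega)]
    have hB : ∏ i ∈ Finset.Icc 1 (2 * m + 2 + 1), phiPvar [b] i
        = lK ^ 2 * wK⁻¹ * lK ^ (2 * (m + 1)) := by
      rw [show 2 * m + 2 + 1 = 2 * (m + 1) + 1 from by omega]
      exact prod_phi_odd b hbpos (m + 1)
    rw [hA, hB, show b + 2 = ((2 * m + 4 : ℕ) : ℤ) from by omega, zpow_natCast]
    ring
  · intro hbneg
    set m : ℕ := b.natAbs / 2 - 1 with hmdef
    have hm : b.natAbs = 2 * m + 2 := by omega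
    have hvar : phiPvar [b - 2] = phiPvar [b] := phiPvar_congr _ _ (by omega)
    rw [Fpoly_neg (b - 2) (by omega), Fpoly_neg b hbneg, phiP_F, phiP_F, hvar,
      show (b - 2).natAbs = 2 * m + 4 from by omega, hm,
      show (2 * m + 4 : ℕ) - 1 = 2 * m + 3 from by omega,
      show (2 * m + 2 : ℕ) - 1 = 2 * m + 1 from by omega,
      show (2 * m + 4 : ℕ) = (2 * m + 3) + 1 from by omega,
      Finset.sum_Icc_succ_top (by omega),
      show (2 * m + 3 : ℕ) = (2 * m + 2) + 1 from by omega,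
      Finset.sum_Icc_succ_top (by omega)]
    have hT1 : ∏ i ∈ Finset.Icc (2 * m + 2 + 1 + 1) (2 * m + 2 + 1), phiPvar [b] i = 1 := by
      rw [Finset.Icc_eq_empty (by omega), Finset.prod_empty]
    have hT2 : ∏ i ∈ Finset.Icc (2 * m + 2 + 1) (2 * m + 2 + 1), phiPvar [b] i = -qK⁻¹ := by
      rw [Finset.Icc_self, Finset.prod_singleton]
      exact phiPvar_odd' [b] _ (by omega) (by omega)
    have key : ∑ k ∈ Finset.Icc 1 (2 * m + 2), ∏ i ∈ Finset.Icc k (2 * m + 2 + 1), phiPvar [b] i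
        = lK ^ 2 * ∑ k ∈ Finset.Icc 1 (2 * m + 2),
            ∏ i ∈ Finset.Icc k (2 * m + 1), phiPvar [b] i := by
      rw [Finset.mul_sum]
      refine Finset.sum_congr rfl fun k hk => ?_
      rw [Finset.mem_Icc] at hk
      rw [Finset.prod_Icc_succ_top (by omega),
          show (2 * m + 2 : ℕ) = (2 * m + 1) + 1 from by omega,
          Finset.prod_Icc_succ_top (by omega),
          mul_assoc, phiPvar_pair [b] (2 * m + 1 + 1) (by omega) (by omega)]
      ring
    rw [key, hT1, hT2]
    ring
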